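/- arXiv:2210.15290 — 2 statements merged into one kernel-verified Lean document; each statement's English description precedes it below -/
import Mathlib

section
/- Under the bilinear regression model Y = X M* Z + E with ‖X M* Z‖_∞ ≤ C, ‖XMZ‖ entries clipped via Π_C, and entries E_{ij} independent with mean zero satisfying E[|E_{ij}|^k] ≤ σ² k! ξ^{k−2}/2 for k ≥ 2, set T_{ij} = (Y_{ij} − (XM*Z)_{ij})² − (Y_{ij} − (Π_C(XMZ))_{ij})². Then Σ_{ij} E[T_{ij}²] ≤ 8(σ² + C²)·Σ_{ij}((XM*Z)_{ij} − (Π_C(XMZ))_{ij})². -/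
/-!
Writing `d = (XM*Z)ᵢⱼ − (Π_C(XMZ))ᵢⱼ` and `e = Eᵢⱼ`, the excess loss is `T = e² − (e + d)²`, so
`T² = 4d²e² + 4d³e + d⁴`. The noise is centered, so the cross term vanishes in expectation and
`E[T²] = 4d² E[e²] + d⁴`. The moment condition at `k = 2` gives `E[e²] ≤ σ²`, and both matrices
have entries in `[−C, C]`, so `d² ≤ 4C²`; hence `E[T²] ≤ 4(σ² + C²) d²`. Summing over the
entries gives the claim.
-/

open MeasureTheory Finset

lemma abs_max_neg_min_le {C : ℝ} (hC : 0 ≤ C) (x : ℝ) : |max (-C) (min C x)| ≤ C :=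
  abs_le.2 ⟨le_max_left _ _, max_le (by linarith) (min_le_left _ _)⟩

lemma sq_sub_sq_add_sq (e d : ℝ) :
    (e ^ 2 - (e + d) ^ 2) ^ 2 = 4 * d ^ 2 * e ^ 2 + 4 * d ^ 3 * e + d ^ 4 := by
  ring

section

variable {Ω : Type*} [MeasurableSpace Ω] {μ : Measure Ω} [IsProbabilityMeasure μ] {e : Ω → ℝ}

lemma integral_sq_sub_sq_add_sq (he : Integrable e μ) (he2 : Integrable (fun ω => e ω ^ 2) μ)
    (hmean : ∫ ω, e ω ∂μ = 0) (d : ℝ) :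
    ∫ ω, (e ω ^ 2 - (e ω + d) ^ 2) ^ 2 ∂μ = 4 * d ^ 2 * ∫ ω, e ω ^ 2 ∂μ + d ^ 4 := by
  have hlin : Integrable (fun ω => 4 * d ^ 2 * e ω ^ 2 + 4 * d ^ 3 * e ω) μ :=
    (he2.const_mul _).add (he.const_mul _)
  simp_rw [sq_sub_sq_add_sq]
  rw [integral_add hlin (integrable_const _),
    integral_add (he2.const_mul _) (he.const_mul _), integral_const_mul, integral_const_mul,
    hmean, integral_const]
  simp

lemma integral_sq_sub_sq_add_le (he : Integrable e μ) (he2 : Integrable (fun ω => e ω ^ 2) μ)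
    (hmean : ∫ ω, e ω ∂μ = 0) {σ C a b : ℝ} (hvar : ∫ ω, e ω ^ 2 ∂μ ≤ σ ^ 2)
    (ha : |a| ≤ C) (hb : |b| ≤ C) :
    ∫ ω, (e ω ^ 2 - (e ω + (a - b)) ^ 2) ^ 2 ∂μ ≤ 4 * (σ ^ 2 + C ^ 2) * (a - b) ^ 2 := by
  have hd : (a - b) ^ 2 ≤ 4 * C ^ 2 := by
    rw [← sq_abs]
    nlinarith [abs_sub a b, abs_nonneg (a - b)]
  rw [integral_sq_sub_sq_add_sq he he2 hmean]
  nlinarith [sq_nonneg (a - b)]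

end

theorem pac_bayes_variance_bound_general
    {Ω : Type*} [MeasurableSpace Ω] (μ : Measure Ω) [IsProbabilityMeasure μ]
    {n q p k : ℕ}
    (X : Matrix (Fin n) (Fin p) ℝ) (Z : Matrix (Fin k) (Fin q) ℝ)
    (Mstar M : Matrix (Fin p) (Fin k) ℝ)
    (En : Ω → Matrix (Fin n) (Fin q) ℝ)
    (hmeas : ∀ i j, Measurable (fun ω => En ω i j))
    (hint : ∀ i j (r : ℕ), Integrable (fun ω => |En ω i j| ^ r) μ)
    (hmean : ∀ i j, ∫ ω, En ω i j ∂μ = 0)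
    (σ ξ : ℝ)
    (hmom : ∀ i j, ∀ r : ℕ, 2 ≤ r →
      ∫ ω, |En ω i j| ^ r ∂μ ≤ σ ^ 2 * (Nat.factorial r) * ξ ^ (r - 2) / 2)
    (Y : Ω → Matrix (Fin n) (Fin q) ℝ) (hY : ∀ ω, Y ω = X * Mstar * Z + En ω)
    (C : ℝ)
    (hCbound : ∀ i j, |(X * Mstar * Z) i j| ≤ C)
    (clip : Matrix (Fin n) (Fin q) ℝ → Matrix (Fin n) (Fin q) ℝ)
    (hclip : ∀ A i j, clip A i j = max (-C) (min C (A i j)))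
    (T : Fin n → Fin q → Ω → ℝ)
    (hT : ∀ i j ω, T i j ω = (Y ω i j - (X * Mstar * Z) i j) ^ 2
        - (Y ω i j - clip (X * M * Z) i j) ^ 2) :
    ∑ i, ∑ j, ∫ ω, (T i j ω) ^ 2 ∂μ
      ≤ 8 * (σ ^ 2 + C ^ 2) *
        ∑ i, ∑ j, ((X * Mstar * Z) i j - clip (X * M * Z) i j) ^ 2 := by
  have hentry : ∀ i j, ∫ ω, (T i j ω) ^ 2 ∂μ
      ≤ 8 * (σ ^ 2 + C ^ 2) * ((X * Mstar * Z) i j - clip (X * M * Z) i j) ^ 2 := by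
    intro i j
    have hE : Integrable (fun ω => En ω i j) μ :=
      (integrable_norm_iff (hmeas i j).aestronglyMeasurable).1 (by simpa using hint i j 1)
    have hE2 : Integrable (fun ω => En ω i j ^ 2) μ := by simpa using hint i j 2
    have hvar : ∫ ω, En ω i j ^ 2 ∂μ ≤ σ ^ 2 := by simpa using hmom i j 2 le_rfl
    have hclipC : |clip (X * M * Z) i j| ≤ C :=
      hclip (X * M * Z) i j ▸ abs_max_neg_min_le ((abs_nonneg _).trans (hCbound i j)) _
    have hTsq : (fun ω => T i j ω ^ 2) = fun ω => (En ω i j ^ 2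
        - (En ω i j + ((X * Mstar * Z) i j - clip (X * M * Z) i j)) ^ 2) ^ 2 := by
      ext ω
      rw [hT, hY, Matrix.add_apply]
      ring
    rw [hTsq]
    refine (integral_sq_sub_sq_add_le hE hE2 (hmean i j) hvar (hCbound i j) hclipC).trans ?_
    gcongr
    norm_num
  calc ∑ i, ∑ j, ∫ ω, (T i j ω) ^ 2 ∂μ
      ≤ ∑ i, ∑ j, 8 * (σ ^ 2 + C ^ 2) * ((X * Mstar * Z) i j - clip (X * M * Z) i j) ^ 2 :=
        sum_le_sum fun i _ => sum_le_sum fun j _ => hentry i j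
    _ = 8 * (σ ^ 2 + C ^ 2) * ∑ i, ∑ j, ((X * Mstar * Z) i j - clip (X * M * Z) i j) ^ 2 := by
        simp_rw [mul_sum]

/-- **Variance bound in the PAC-Bayes proof for bilinear regression.** With
`Y = X M* Z + E`, independent centered noise entries satisfying the
sub-exponential moment condition, `‖X M* Z‖_∞ ≤ C`, and
`T_{ij} = (Y_{ij} − (XM*Z)_{ij})² − (Y_{ij} − (Π_C(XMZ))_{ij})²`, we have
`∑_{ij} E[T_{ij}²] ≤ 8(σ² + C²) ∑_{ij} ((XM*Z)_{ij} − (Π_C(XMZ))_{ij})²`. -/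
theorem pac_bayes_variance_bound
    {Ω : Type*} [MeasurableSpace Ω] (μ : Measure Ω) [IsProbabilityMeasure μ]
    {n q p k : ℕ}
    (X : Matrix (Fin n) (Fin p) ℝ) (Z : Matrix (Fin k) (Fin q) ℝ)
    (Mstar M : Matrix (Fin p) (Fin k) ℝ)
    (En : Ω → Matrix (Fin n) (Fin q) ℝ)
    (hmeas : ∀ i j, Measurable (fun ω => En ω i j))
    (hindep : ProbabilityTheory.iIndepFun
      (fun (ij : Fin n × Fin q) ω => En ω ij.1 ij.2) μ)
    (hint : ∀ i j (r : ℕ), Integrable (fun ω => |En ω i j| ^ r) μ)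
    (hmean : ∀ i j, ∫ ω, En ω i j ∂μ = 0)
    (σ ξ : ℝ) (hσ : 0 < σ) (hξ : 0 < ξ)
    (hmom : ∀ i j, ∀ r : ℕ, 2 ≤ r →
      ∫ ω, |En ω i j| ^ r ∂μ ≤ σ ^ 2 * (Nat.factorial r) * ξ ^ (r - 2) / 2)
    (Y : Ω → Matrix (Fin n) (Fin q) ℝ) (hY : ∀ ω, Y ω = X * Mstar * Z + En ω)
    (C : ℝ) (hC : 0 < C)
    (hCbound : ∀ i j, |(X * Mstar * Z) i j| ≤ C)
    (clip : Matrix (Fin n) (Fin q) ℝ → Matrix (Fin n) (Fin q) ℝ)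
    (hclip : ∀ A i j, clip A i j = max (-C) (min C (A i j)))
    (T : Fin n → Fin q → Ω → ℝ)
    (hT : ∀ i j ω, T i j ω = (Y ω i j - (X * Mstar * Z) i j) ^ 2
        - (Y ω i j - clip (X * M * Z) i j) ^ 2) :
    ∑ i, ∑ j, ∫ ω, (T i j ω) ^ 2 ∂μ
      ≤ 8 * (σ ^ 2 + C ^ 2) *
        ∑ i, ∑ j, ((X * Mstar * Z) i j - clip (X * M * Z) i j) ^ 2 :=
  pac_bayes_variance_bound_general μ X Z Mstar M En hmeas hint hmean σ ξ hmom Y hY C hCbound clip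
    hclip T hT
end

section
/- Under the same setup, for every integer k ≥ 3, Σ_{ij} E[T_{ij}^k] ≤ v·k!·C₂^{k−2}/2, where v = 8(σ²+C²)·Σ_{ij}((XM*Z)_{ij} − (Π_C(XMZ))_{ij})² and C₂ = 64·C·max(ξ, C). -/
open MeasureTheory Finset

/-!
Writing `d = (XM*Z)_{ij} − (Π_C(XMZ))_{ij}`, so that `|d| ≤ 2C`, each summand is
`T = E² − (E + d)² = −d (2E + d)`, whence `|T|^r ≤ |d|² (2C)^{r−2} 2^r (|E| + C)^r`.
Convexity of `x ↦ x^r` splits `(|E| + C)^r` into `|E|^r + C^r`; the Bernstein condition bounds the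
moment of `|E|^r`, and `C^r ≤ C² r! max(ξ, C)^{r−2} / 2` since `r! ≥ 2`.
-/

lemma abs_sq_sub_add_sq_pow_le {e d C : ℝ} (hd : |d| ≤ 2 * C) {r : ℕ} (hr : 2 ≤ r) :
    |(e ^ 2 - (e + d) ^ 2) ^ r| ≤ 8 * d ^ 2 * (8 * C) ^ (r - 2) * (|e| ^ r + C ^ r) := by
  obtain ⟨s, rfl⟩ := Nat.exists_eq_add_of_le' hr
  have hC : 0 ≤ C := by linarith [abs_nonneg d]
  have hfactor : |e ^ 2 - (e + d) ^ 2| ≤ |d| * (2 * (|e| + C)) := by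
    rw [show e ^ 2 - (e + d) ^ 2 = -(d * (2 * e + d)) by ring, abs_neg, abs_mul]
    gcongr
    calc |2 * e + d| ≤ |2 * e| + |d| := abs_add_le _ _
      _ ≤ 2 * (|e| + C) := by rw [abs_mul, abs_two]; linarith
  calc |(e ^ 2 - (e + d) ^ 2) ^ (s + 2)|
      ≤ (|d| * (2 * (|e| + C))) ^ (s + 2) := by rw [abs_pow]; gcongr
    _ = d ^ 2 * |d| ^ s * 2 ^ (s + 2) * (|e| + C) ^ (s + 2) := by
        rw [mul_pow, mul_pow, pow_add |d|, sq_abs]; ring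
    _ ≤ d ^ 2 * (2 * C) ^ s * 2 ^ (s + 2) * (2 ^ (s + 1) * (|e| ^ (s + 2) + C ^ (s + 2))) := by
        gcongr
        exact add_pow_le (abs_nonneg e) hC (s + 2)
    _ = 8 * d ^ 2 * (8 * C) ^ (s + 2 - 2) * (|e| ^ (s + 2) + C ^ (s + 2)) := by
        rw [Nat.add_sub_cancel, mul_pow 8 C, mul_pow 2 C,
          show (8 : ℝ) ^ s = 2 ^ s * 2 ^ s * 2 ^ s by rw [← mul_pow, ← mul_pow]; norm_num]
        ring

lemma add_pow_le_bernstein_of_le {a σ ξ C : ℝ} {r : ℕ}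
    (ha : a ≤ σ ^ 2 * r.factorial * ξ ^ (r - 2) / 2) (hξ : 0 ≤ ξ) (hC : 0 ≤ C) (hr : 2 ≤ r) :
    a + C ^ r ≤ (σ ^ 2 + C ^ 2) * r.factorial * max ξ C ^ (r - 2) / 2 := by
  have hfact : (1 : ℝ) ≤ r.factorial / 2 := by
    rw [le_div_iff₀ two_pos, one_mul]
    exact_mod_cast Nat.factorial_two.symm.le.trans (Nat.factorial_le hr)
  have hCr : C ^ r ≤ C ^ 2 * r.factorial * max ξ C ^ (r - 2) / 2 :=
    calc C ^ r = C ^ 2 * C ^ (r - 2) * 1 := by rw [← pow_add, Nat.add_sub_cancel' hr, mul_one]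
      _ ≤ C ^ 2 * max ξ C ^ (r - 2) * (r.factorial / 2) := by gcongr; exact le_max_right ξ C
      _ = C ^ 2 * r.factorial * max ξ C ^ (r - 2) / 2 := by ring
  have hξm : ξ ^ (r - 2) ≤ max ξ C ^ (r - 2) := by gcongr; exact le_max_left ξ C
  calc a + C ^ r
      ≤ σ ^ 2 * r.factorial * max ξ C ^ (r - 2) / 2 + C ^ 2 * r.factorial * max ξ C ^ (r - 2) / 2 :=
        add_le_add (ha.trans (by gcongr)) hCr
    _ = (σ ^ 2 + C ^ 2) * r.factorial * max ξ C ^ (r - 2) / 2 := by ring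

section Moments

variable {Ω : Type*} [MeasurableSpace Ω] {μ : Measure Ω} [IsProbabilityMeasure μ] {E : Ω → ℝ}
  {d C : ℝ} {r : ℕ}

lemma integral_sq_sub_add_sq_pow_le (hE : AEStronglyMeasurable E μ)
    (hint : Integrable (fun ω => |E ω| ^ r) μ) (hd : |d| ≤ 2 * C) (hr : 2 ≤ r) :
    ∫ ω, (E ω ^ 2 - (E ω + d) ^ 2) ^ r ∂μ
      ≤ 8 * d ^ 2 * (8 * C) ^ (r - 2) * (∫ ω, |E ω| ^ r ∂μ + C ^ r) := by
  have hpt : ∀ ω, |(E ω ^ 2 - (E ω + d) ^ 2) ^ r|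
      ≤ 8 * d ^ 2 * (8 * C) ^ (r - 2) * (|E ω| ^ r + C ^ r) :=
    fun ω => abs_sq_sub_add_sq_pow_le hd hr
  have hbound : Integrable (fun ω => 8 * d ^ 2 * (8 * C) ^ (r - 2) * (|E ω| ^ r + C ^ r)) μ :=
    (hint.add (integrable_const _)).const_mul _
  have hmeas : AEStronglyMeasurable (fun ω => (E ω ^ 2 - (E ω + d) ^ 2) ^ r) μ := by fun_prop
  calc ∫ ω, (E ω ^ 2 - (E ω + d) ^ 2) ^ r ∂μ
      ≤ ∫ ω, 8 * d ^ 2 * (8 * C) ^ (r - 2) * (|E ω| ^ r + C ^ r) ∂μ :=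
        integral_mono (hbound.mono' hmeas (ae_of_all _ hpt)) hbound
          fun ω => (le_abs_self _).trans (hpt ω)
    _ = 8 * d ^ 2 * (8 * C) ^ (r - 2) * (∫ ω, |E ω| ^ r ∂μ + C ^ r) := by
        rw [integral_const_mul, integral_add hint (integrable_const _), integral_const]
        simp

lemma integral_sq_sub_add_sq_pow_le_of_bernstein {σ ξ : ℝ} (hE : AEStronglyMeasurable E μ)
    (hint : Integrable (fun ω => |E ω| ^ r) μ)
    (hmom : ∫ ω, |E ω| ^ r ∂μ ≤ σ ^ 2 * r.factorial * ξ ^ (r - 2) / 2) (hξ : 0 ≤ ξ)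
    (hd : |d| ≤ 2 * C) (hr : 2 ≤ r) :
    ∫ ω, (E ω ^ 2 - (E ω + d) ^ 2) ^ r ∂μ
      ≤ d ^ 2 * (8 * (σ ^ 2 + C ^ 2) * r.factorial * (64 * C * max ξ C) ^ (r - 2) / 2) := by
  have hC : 0 ≤ C := by linarith [abs_nonneg d]
  calc ∫ ω, (E ω ^ 2 - (E ω + d) ^ 2) ^ r ∂μ
      ≤ 8 * d ^ 2 * (8 * C) ^ (r - 2) * (∫ ω, |E ω| ^ r ∂μ + C ^ r) :=
        integral_sq_sub_add_sq_pow_le hE hint hd hr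
    _ ≤ 8 * d ^ 2 * (8 * C) ^ (r - 2) * ((σ ^ 2 + C ^ 2) * r.factorial * max ξ C ^ (r - 2) / 2) := by
        gcongr
        exact add_pow_le_bernstein_of_le hmom hξ hC hr
    _ = d ^ 2 * (8 * (σ ^ 2 + C ^ 2) * r.factorial * (8 * C * max ξ C) ^ (r - 2) / 2) := by
        rw [mul_pow (8 * C)]; ring
    _ ≤ d ^ 2 * (8 * (σ ^ 2 + C ^ 2) * r.factorial * (64 * C * max ξ C) ^ (r - 2) / 2) := by
        have : 0 ≤ C * max ξ C := mul_nonneg hC (hC.trans (le_max_right ξ C))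
        gcongr
        linarith

end Moments

theorem pac_bayes_higher_moment_bound_general
    {Ω : Type*} [MeasurableSpace Ω] (μ : Measure Ω) [IsProbabilityMeasure μ]
    {n q p k : ℕ}
    (X : Matrix (Fin n) (Fin p) ℝ) (Z : Matrix (Fin k) (Fin q) ℝ)
    (Mstar M : Matrix (Fin p) (Fin k) ℝ)
    (En : Ω → Matrix (Fin n) (Fin q) ℝ)
    (hmeas : ∀ i j, Measurable (fun ω => En ω i j))
    (hint : ∀ i j (r : ℕ), Integrable (fun ω => |En ω i j| ^ r) μ)
    (σ ξ : ℝ) (hξ : 0 < ξ)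
    (hmom : ∀ i j, ∀ r : ℕ, 2 ≤ r →
      ∫ ω, |En ω i j| ^ r ∂μ ≤ σ ^ 2 * (Nat.factorial r) * ξ ^ (r - 2) / 2)
    (Y : Ω → Matrix (Fin n) (Fin q) ℝ) (hY : ∀ ω, Y ω = X * Mstar * Z + En ω)
    (C : ℝ)
    (hCbound : ∀ i j, |(X * Mstar * Z) i j| ≤ C)
    (clip : Matrix (Fin n) (Fin q) ℝ → Matrix (Fin n) (Fin q) ℝ)
    (hclip : ∀ A i j, clip A i j = max (-C) (min C (A i j)))
    (T : Fin n → Fin q → Ω → ℝ)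
    (hT : ∀ i j ω, T i j ω = (Y ω i j - (X * Mstar * Z) i j) ^ 2
        - (Y ω i j - clip (X * M * Z) i j) ^ 2)
    (v C₂ : ℝ)
    (hv : v = 8 * (σ ^ 2 + C ^ 2) *
      ∑ i, ∑ j, ((X * Mstar * Z) i j - clip (X * M * Z) i j) ^ 2)
    (hC₂ : C₂ = 64 * C * max ξ C) :
    ∀ r : ℕ, 3 ≤ r →
      ∑ i, ∑ j, ∫ ω, (T i j ω) ^ r ∂μ
        ≤ v * (Nat.factorial r) * C₂ ^ (r - 2) / 2 := by
  intro r hr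
  set d : Fin n → Fin q → ℝ := fun i j => (X * Mstar * Z) i j - clip (X * M * Z) i j
  have hd : ∀ i j, |d i j| ≤ 2 * C := fun i j => by
    have hC : 0 ≤ C := (abs_nonneg _).trans (hCbound i j)
    have hclipC : |clip (X * M * Z) i j| ≤ C := by
      rw [hclip, abs_le]
      exact ⟨le_max_left _ _, max_le (by linarith) (min_le_left _ _)⟩
    linarith [abs_sub ((X * Mstar * Z) i j) (clip (X * M * Z) i j), hCbound i j]
  have hT_eq : ∀ i j ω, T i j ω = En ω i j ^ 2 - (En ω i j + d i j) ^ 2 := fun i j ω => by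
    rw [hT, hY, Matrix.add_apply]; ring
  calc ∑ i, ∑ j, ∫ ω, (T i j ω) ^ r ∂μ
      ≤ ∑ i, ∑ j, d i j ^ 2 * (8 * (σ ^ 2 + C ^ 2) * r.factorial * C₂ ^ (r - 2) / 2) := by
        simp_rw [hT_eq, hC₂]
        gcongr with i _ j _
        exact integral_sq_sub_add_sq_pow_le_of_bernstein (hmeas i j).aestronglyMeasurable
          (hint i j r) (hmom i j r (by omega)) hξ.le (hd i j) (by omega)
    _ = v * (Nat.factorial r) * C₂ ^ (r - 2) / 2 := by
        simp_rw [hv, ← Finset.sum_mul]; ring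

/-- **Higher-moment bound in the PAC-Bayes proof for bilinear regression.**
With `T_{ij} = (Y_{ij} − (XM*Z)_{ij})² − (Y_{ij} − (Π_C(XMZ))_{ij})²`, for
every integer `r ≥ 3`,
`∑_{ij} E[T_{ij}^r] ≤ v · r! · C₂^{r−2} / 2`, where
`v = 8(σ²+C²) ∑_{ij} ((XM*Z)_{ij} − (Π_C(XMZ))_{ij})²` and
`C₂ = 64 C max(ξ, C)`. -/
theorem pac_bayes_higher_moment_bound
    {Ω : Type*} [MeasurableSpace Ω] (μ : Measure Ω) [IsProbabilityMeasure μ]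
    {n q p k : ℕ}
    (X : Matrix (Fin n) (Fin p) ℝ) (Z : Matrix (Fin k) (Fin q) ℝ)
    (Mstar M : Matrix (Fin p) (Fin k) ℝ)
    (En : Ω → Matrix (Fin n) (Fin q) ℝ)
    (hmeas : ∀ i j, Measurable (fun ω => En ω i j))
    (hindep : ProbabilityTheory.iIndepFun
      (fun (ij : Fin n × Fin q) ω => En ω ij.1 ij.2) μ)
    (hint : ∀ i j (r : ℕ), Integrable (fun ω => |En ω i j| ^ r) μ)
    (hmean : ∀ i j, ∫ ω, En ω i j ∂μ = 0)
    (σ ξ : ℝ) (hσ : 0 < σ) (hξ : 0 < ξ)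
    (hmom : ∀ i j, ∀ r : ℕ, 2 ≤ r →
      ∫ ω, |En ω i j| ^ r ∂μ ≤ σ ^ 2 * (Nat.factorial r) * ξ ^ (r - 2) / 2)
    (Y : Ω → Matrix (Fin n) (Fin q) ℝ) (hY : ∀ ω, Y ω = X * Mstar * Z + En ω)
    (C : ℝ) (hC : 0 < C)
    (hCbound : ∀ i j, |(X * Mstar * Z) i j| ≤ C)
    (clip : Matrix (Fin n) (Fin q) ℝ → Matrix (Fin n) (Fin q) ℝ)
    (hclip : ∀ A i j, clip A i j = max (-C) (min C (A i j)))
    (T : Fin n → Fin q → Ω → ℝ)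
    (hT : ∀ i j ω, T i j ω = (Y ω i j - (X * Mstar * Z) i j) ^ 2
        - (Y ω i j - clip (X * M * Z) i j) ^ 2)
    (v C₂ : ℝ)
    (hv : v = 8 * (σ ^ 2 + C ^ 2) *
      ∑ i, ∑ j, ((X * Mstar * Z) i j - clip (X * M * Z) i j) ^ 2)
    (hC₂ : C₂ = 64 * C * max ξ C) :
    ∀ r : ℕ, 3 ≤ r →
      ∑ i, ∑ j, ∫ ω, (T i j ω) ^ r ∂μ
        ≤ v * (Nat.factorial r) * C₂ ^ (r - 2) / 2 :=
  pac_bayes_higher_moment_bound_general μ X Z Mstar M En hmeas hint σ ξ hξ hmom Y hY C hCbound clip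
    hclip T hT v C₂ hv hC₂
end
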